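/- Let Ω ⊂ ℝ^d be a bounded convex domain and let u : closure(Ω) → ℝ and w : closure(Ω) → ℝ^d be Lipschitz. Then the pointwise constraint (1/2)·(∇u ⊗ ∇u) + e(w) ≤ Id holding almost everywhere in Ω is equivalent to the two-point condition (1/2)|u(y) − u(x)|² + ⟨w(y) − w(x), y − x⟩ ≤ |x − y|² for all x, y in closure(Ω). -/

import Mathlib

/-!
Along the segment `γ t = x + t (y - x)`, the constraint in the direction `y - x` says
`f'² / 2 + g' ≤ |y - x|²` for `f = u ∘ γ` and `g = ⟪w ∘ γ, y - x⟫`; integrating over `[0, 1]` and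
using `(∫ f')² ≤ ∫ f'²` gives the two-point inequality.
Lipschitz functions are absolutely continuous on segments, so this works as soon as the
constraint holds a.e. on the segment; by Fubini this is the case for almost every translate of
the segment, and the inequality passes to the limit by continuity. Conversely, dividing the
two-point inequality for `x` and `x + tτ` by `t²` and letting `t → 0⁺` gives the constraint at
every point of differentiability.
-/

open MeasureTheory Set Filter Topology AffineMap

theorem AbsolutelyContinuousOnInterval.half_sq_sub_add_sub_le {f g : ℝ → ℝ} {N : ℝ}
    (hf : AbsolutelyContinuousOnInterval f 0 1) (hg : AbsolutelyContinuousOnInterval g 0 1)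
    (h : ∀ᵐ s, s ∈ Icc (0 : ℝ) 1 → 1 / 2 * deriv f s ^ 2 + deriv g s ≤ N) :
    1 / 2 * (f 1 - f 0) ^ 2 + (g 1 - g 0) ≤ N := by
  set c := f 1 - f 0
  -- `ψ' = N + c² / 2 - g' - c f' ≥ (f' - c)² / 2`, so `ψ` is nondecreasing.
  set ψ : ℝ → ℝ := fun s => (N + c ^ 2 / 2) * s - (g s + c * f s)
  have hlin : AbsolutelyContinuousOnInterval (fun s : ℝ => (N + c ^ 2 / 2) * s) 0 1 :=
    LipschitzWith.id.lipschitzOnWith.absolutelyContinuousOnInterval.const_mul _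
  have hψ : AbsolutelyContinuousOnInterval ψ 0 1 := hlin.fun_sub (hg.fun_add (hf.const_mul c))
  have hderiv : ∀ᵐ s ∂volume.restrict (Icc (0 : ℝ) 1), 0 ≤ deriv ψ s := by
    rw [ae_restrict_iff' measurableSet_Icc]
    filter_upwards [h, hf.ae_differentiableAt, hg.ae_differentiableAt] with s hs hfs hgs hs01
    rw [uIcc_of_le zero_le_one] at hfs hgs
    have : HasDerivAt ψ ((N + c ^ 2 / 2) * 1 - (deriv g s + c * deriv f s)) s :=
      ((hasDerivAt_id s).const_mul _).sub
        ((hgs hs01).hasDerivAt.add ((hfs hs01).hasDerivAt.const_mul c))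
    rw [this.deriv]
    nlinarith [hs hs01, sq_nonneg (deriv f s - c)]
  have hmono := intervalIntegral.integral_nonneg_of_ae_restrict zero_le_one hderiv
  rw [hψ.integral_deriv_eq_sub] at hmono
  simp only [ψ] at hmono
  nlinarith

theorem half_sq_add_le_of_hasDerivAt {f g : ℝ → ℝ} {f' g' N : ℝ} (hf : HasDerivAt f f' 0)
    (hg : HasDerivAt g g' 0)
    (h : ∀ᶠ t in 𝓝[>] 0, 1 / 2 * (f t - f 0) ^ 2 + t * (g t - g 0) ≤ N * t ^ 2) :
    1 / 2 * f' ^ 2 + g' ≤ N := by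
  have hslope {φ : ℝ → ℝ} {φ' : ℝ} (hφ : HasDerivAt φ φ' 0) :
      Tendsto (slope φ 0) (𝓝[>] 0) (𝓝 φ') :=
    (hasDerivAt_iff_tendsto_slope.1 hφ).mono_left (nhdsWithin_mono _ fun t ht => ne_of_gt ht)
  refine le_of_tendsto (((hslope hf).pow 2).const_mul (1 / 2) |>.add (hslope hg)) ?_
  filter_upwards [h, self_mem_nhdsWithin] with t ht (htpos : 0 < t)
  have hquot : 1 / 2 * slope f 0 t ^ 2 + slope g 0 t
      = (1 / 2 * (f t - f 0) ^ 2 + t * (g t - g 0)) / t ^ 2 := by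
    rw [slope_def_field, slope_def_field, sub_zero]
    field_simp
  rw [hquot, div_le_iff₀ (by positivity)]
  exact ht

theorem ae_ae_add_notMem {G α : Type*} [AddGroup G] [MeasurableSpace G] [MeasurableAdd₂ G]
    [MeasurableSpace α] {μ : Measure G} [μ.IsAddLeftInvariant] [SFinite μ] {ν : Measure α}
    [SFinite ν] {γ : α → G} (hγ : Measurable γ) {B : Set G} (hB : μ B = 0) :
    ∀ᵐ z ∂μ, ∀ᵐ t ∂ν, γ t + z ∉ B := by
  set B' := toMeasurable μ B
  suffices ∀ᵐ z ∂μ, ∀ᵐ t ∂ν, γ t + z ∉ B' from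
    this.mono fun z hz => hz.mono fun t ht hB => ht (subset_toMeasurable μ B hB)
  have hmeas : MeasurableSet {p : G × α | γ p.2 + p.1 ∉ B'} :=
    ((hγ.comp measurable_snd).add measurable_fst (measurableSet_toMeasurable μ B)).compl
  refine (Measure.ae_ae_comm (μ := μ) (ν := ν) (p := fun z t => γ t + z ∉ B') hmeas).2
    (ae_of_all _ fun t => ?_)
  rw [ae_iff]
  simp only [not_not]
  exact (measure_preimage_add μ (γ t) B').trans (measure_toMeasurable B) |>.trans hB

theorem LipschitzOnWith.ae_differentiableAt_of_isOpen {E F : Type*} [NormedAddCommGroup E]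
    [NormedSpace ℝ E] [FiniteDimensional ℝ E] [MeasurableSpace E] [BorelSpace E]
    [NormedAddCommGroup F] [NormedSpace ℝ F] [FiniteDimensional ℝ F] {μ : Measure E}
    [μ.IsAddHaarMeasure] {C : NNReal} {f : E → F} {s : Set E} (hf : LipschitzOnWith C f s)
    (hs : IsOpen s) : ∀ᵐ x ∂μ, x ∈ s → DifferentiableAt ℝ f x :=
  hf.ae_differentiableWithinAt_of_mem.mono fun _ hx hxs =>
    (hx hxs).differentiableAt (hs.mem_nhds hxs)

section Constraints

variable {E : Type*} [NormedAddCommGroup E] [InnerProductSpace ℝ E] {u : E → ℝ} {w : E → E}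

/-- Since `⟪Dw τ, τ⟫ = ⟪e(w) τ, τ⟫`, testing on all directions `τ` is the matrix inequality
`(1/2) ∇u ⊗ ∇u + e(w) ≤ Id`. -/
def PointwiseConstraint (u : E → ℝ) (w : E → E) (x : E) : Prop :=
  DifferentiableAt ℝ u x ∧ DifferentiableAt ℝ w x ∧
    ∀ τ, 1 / 2 * fderiv ℝ u x τ ^ 2 + inner ℝ (fderiv ℝ w x τ) τ ≤ ‖τ‖ ^ 2

def TwoPointConstraint (u : E → ℝ) (w : E → E) (x y : E) : Prop :=
  1 / 2 * (u y - u x) ^ 2 + inner ℝ (w y - w x) (y - x) ≤ ‖y - x‖ ^ 2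

theorem TwoPointConstraint.of_ae_lineMap {S : Set E} {Ku Kw : NNReal}
    (hu : LipschitzOnWith Ku u S) (hw : LipschitzOnWith Kw w S) (hS : Convex ℝ S) {x y : E}
    (hx : x ∈ S) (hy : y ∈ S)
    (h : ∀ᵐ t, t ∈ Icc (0 : ℝ) 1 → PointwiseConstraint u w (lineMap x y t)) :
    TwoPointConstraint u w x y := by
  have hseg : LipschitzOnWith _ (lineMap x y : ℝ → E) (uIcc 0 1) :=
    (lipschitzWith_lineMap x y).lipschitzOnWith
  have hmaps : MapsTo (lineMap x y) (uIcc (0 : ℝ) 1) S := by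
    simpa only [uIcc_of_le zero_le_one] using hS.mapsTo_lineMap hx hy
  have hf := (hu.comp hseg hmaps).absolutelyContinuousOnInterval
  have hg := ((innerSL ℝ (y - x)).lipschitz.comp_lipschitzOnWith
    (hw.comp hseg hmaps)).absolutelyContinuousOnInterval
  have key := hf.half_sq_sub_add_sub_le hg (N := ‖y - x‖ ^ 2) ?_
  · simp only [Function.comp_apply, lineMap_apply_one, lineMap_apply_zero, innerSL_apply_apply,
      ← inner_sub_right] at key
    rwa [real_inner_comm] at key
  filter_upwards [h] with t ht ht01
  obtain ⟨hut, hwt, hineq⟩ := ht ht01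
  have hγ : HasDerivAt (lineMap x y) (y - x) t := hasDerivAt_lineMap
  have hfd := (hut.hasFDerivAt.comp_hasDerivAt t hγ).deriv
  have hgd := ((innerSL ℝ (y - x)).hasFDerivAt.comp_hasDerivAt t
    (hwt.hasFDerivAt.comp_hasDerivAt t hγ)).deriv
  simp only [Function.comp_def] at hfd hgd ⊢
  rw [hfd, hgd, innerSL_apply_apply, real_inner_comm]
  exact hineq (y - x)

theorem TwoPointConstraint.of_mem_closure {T : Set E} {S : Set (E × E)}
    (hu : ContinuousOn u T) (hw : ContinuousOn w T) (hST : S ⊆ T ×ˢ T)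
    (hS : ∀ p ∈ S, TwoPointConstraint u w p.1 p.2) {x y : E} (hxy : (x, y) ∈ closure S)
    (hx : x ∈ T) (hy : y ∈ T) : TwoPointConstraint u w x y := by
  have h₁ : ContinuousWithinAt (fun p : E × E => p.1) S (x, y) := continuousWithinAt_fst
  have h₂ : ContinuousWithinAt (fun p : E × E => p.2) S (x, y) := continuousWithinAt_snd
  have hu₁ := (hu x hx).comp h₁ fun p hp => (hST hp).1
  have hu₂ := (hu y hy).comp h₂ fun p hp => (hST hp).2
  have hw₁ := (hw x hx).comp h₁ fun p hp => (hST hp).1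
  have hw₂ := (hw y hy).comp h₂ fun p hp => (hST hp).2
  exact ContinuousWithinAt.closure_le hxy
    (((hu₂.sub hu₁).pow 2).const_mul _ |>.add ((hw₂.sub hw₁).inner (h₂.sub h₁)))
    ((h₂.sub h₁).norm.pow 2) hS

theorem TwoPointConstraint.of_ae_pointwiseConstraint [FiniteDimensional ℝ E] [MeasurableSpace E]
    [BorelSpace E] {μ : Measure E} [μ.IsAddHaarMeasure] {Ω : Set E} {Ku Kw : NNReal}
    (hΩo : IsOpen Ω) (hΩc : Convex ℝ Ω) (hu : LipschitzOnWith Ku u Ω)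
    (hw : LipschitzOnWith Kw w Ω) (h : ∀ᵐ x ∂μ, x ∈ Ω → PointwiseConstraint u w x) {x y : E}
    (hx : x ∈ Ω) (hy : y ∈ Ω) : TwoPointConstraint u w x y := by
  set B := {p | p ∈ Ω ∧ ¬PointwiseConstraint u w p}
  have hB : μ B = 0 := by simpa [ae_iff] using h
  set Z := {z | ∀ᵐ t : ℝ, lineMap x y t + z ∉ B}
  have hZ : Dense Z := Measure.dense_of_ae (ae_ae_add_notMem (μ := μ) (by fun_prop) hB)
  set V := {z | z + x ∈ Ω ∧ z + y ∈ Ω}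
  have hV : IsOpen V := (hΩo.preimage (by fun_prop)).inter (hΩo.preimage (by fun_prop))
  have hshift : Continuous fun z : E => (z + x, z + y) := by fun_prop
  refine of_mem_closure hu.continuousOn hw.continuousOn (S := (fun z => (z + x, z + y)) '' (V ∩ Z))
    ?_ ?_ ?_ hx hy
  · rintro _ ⟨z, ⟨hzV, -⟩, rfl⟩
    exact hzV
  · rintro _ ⟨z, ⟨hzV, hzZ⟩, rfl⟩
    refine of_ae_lineMap hu hw hΩc hzV.1 hzV.2 ?_
    filter_upwards [hzZ] with t ht ht01
    have htranslate : lineMap (z + x) (z + y) t = lineMap x y t + z := by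
      rw [lineMap_apply_module', lineMap_apply_module', add_sub_add_left_eq_sub]
      abel
    by_contra hbad
    exact ht ⟨htranslate ▸ hΩc.lineMap_mem hzV.1 hzV.2 ht01, htranslate ▸ hbad⟩
  · simpa using mem_closure_image hshift.continuousAt
      (hZ.open_subset_closure_inter hV (show (0 : E) ∈ V by simp [V, hx, hy]))

theorem PointwiseConstraint.of_twoPointConstraint {Ω : Set E} {x : E} (hΩ : IsOpen Ω)
    (hx : x ∈ Ω) (h : ∀ y ∈ Ω, TwoPointConstraint u w x y) (hu : DifferentiableAt ℝ u x)
    (hw : DifferentiableAt ℝ w x) : PointwiseConstraint u w x := by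
  refine ⟨hu, hw, fun τ => ?_⟩
  have hw' : HasDerivAt (fun t : ℝ => inner ℝ (w (x + t • τ)) τ)
      (inner ℝ (fderiv ℝ w x τ) τ) 0 := by
    simpa using HasDerivAt.inner ℝ (hw.hasFDerivAt.hasLineDerivAt τ) (hasDerivAt_const 0 τ)
  refine half_sq_add_le_of_hasDerivAt (hu.hasFDerivAt.hasLineDerivAt τ) hw' ?_
  have hline : ∀ᶠ t in 𝓝 (0 : ℝ), x + t • τ ∈ Ω :=
    (Continuous.tendsto (by fun_prop) 0).eventually (by simpa using hΩ.mem_nhds hx)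
  filter_upwards [nhdsWithin_le_nhds hline] with t ht
  have hxt := h _ ht
  simp only [TwoPointConstraint, add_sub_cancel_left, inner_smul_right, norm_smul,
    Real.norm_eq_abs, mul_pow, sq_abs, inner_sub_left] at hxt
  simp only [zero_smul, add_zero]
  linarith

end Constraints

theorem stmt5 {d : ℕ} (Ω : Set (EuclideanSpace ℝ (Fin d)))
    (hΩo : IsOpen Ω) (hΩc : Convex ℝ Ω)
    (u : EuclideanSpace ℝ (Fin d) → ℝ) (w : EuclideanSpace ℝ (Fin d) → EuclideanSpace ℝ (Fin d))
    (Ku Kw : NNReal) (hu : LipschitzOnWith Ku u (closure Ω))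
    (hw : LipschitzOnWith Kw w (closure Ω)) :
    (∀ᵐ x ∂volume, x ∈ Ω → DifferentiableAt ℝ u x → DifferentiableAt ℝ w x →
        ∀ τ : EuclideanSpace ℝ (Fin d),
          (1/2) * (fderiv ℝ u x τ)^2 + (inner ℝ (fderiv ℝ w x τ) τ : ℝ) ≤ ‖τ‖^2)
    ↔ (∀ x ∈ closure Ω, ∀ y ∈ closure Ω,
        (1/2) * (u y - u x)^2 + (inner ℝ (w y - w x) (y - x) : ℝ) ≤ ‖y - x‖^2) := by
  have huΩ := hu.mono subset_closure
  have hwΩ := hw.mono subset_closure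
  constructor
  · intro H x hx y hy
    have hae : ∀ᵐ p ∂volume, p ∈ Ω → PointwiseConstraint u w p := by
      filter_upwards [H, huΩ.ae_differentiableAt_of_isOpen hΩo,
        hwΩ.ae_differentiableAt_of_isOpen hΩo] with p hH hup hwp hpΩ
      exact ⟨hup hpΩ, hwp hpΩ, hH hpΩ (hup hpΩ) (hwp hpΩ)⟩
    refine TwoPointConstraint.of_mem_closure hu.continuousOn hw.continuousOn
      (prod_mono subset_closure subset_closure) (fun p hp => ?_)
      (by rw [closure_prod_eq]; exact ⟨hx, hy⟩) hx hy
    exact .of_ae_pointwiseConstraint hΩo hΩc huΩ hwΩ hae hp.1 hp.2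
  · intro H
    refine ae_of_all _ fun x hx hux hwx => ?_
    exact (PointwiseConstraint.of_twoPointConstraint hΩo hx
      (fun y hy => H x (subset_closure hx) y (subset_closure hy)) hux hwx).2.2
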